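/- Let m ≥ 1, let c_1, ..., c_m be positive reals and ω_0, ω_1, ..., ω_m be positive reals, set A_j = c_j/ω_j, assume A_1 < ... < A_m, and let B_1 < ... < B_m be the zeros of F(λ) = 1 + Σ_{j=1}^m A_j ω_j/(ω_0(A_j − λ)) on ℝ \ {A_1, ..., A_m} (which satisfy A_j < B_j < A_{j+1} and A_m < B_m). Let M be the (m+1)×(m+1) real matrix with M_{00} = (Σ_{j=1}^m c_j)/ω_0, M_{0j} = −c_j/ω_0, M_{j0} = −c_j/ω_j, M_{jj} = c_j/ω_j for 1 ≤ j ≤ m, and all other entries zero. Then the characteristic polynomial of M equals X · Π_{j=1}^m (X − B_j); in particular M has the m+1 simple eigenvalues 0 < B_1 < ... < B_m. -/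

import Mathlib

/-!
The all-ones vector is in the kernel of `M`, and for every zero `μ` of the secular function
`F` the vector `(1, A_j / (A_j - μ))_j` is an eigenvector for `μ`: the rows `j ≥ 1` hold for
any `μ`, and row `0` is exactly the equation `F(μ) = 0`. Hence the monic polynomial
`M.charpoly` of degree `m + 1` vanishes at the `m + 1` distinct points `0 < B_1 < ⋯ < B_m`,
which determines it.
-/

open Polynomial Finset
open scoped Matrix

theorem Polynomial.eq_prod_X_sub_C_of_monic_of_natDegree_eq_card {R : Type*} [CommRing R]
    [IsDomain R] {p : R[X]} (hp : p.Monic) {s : Finset R} (hdeg : p.natDegree = #s)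
    (hroot : ∀ x ∈ s, p.IsRoot x) : p = ∏ x ∈ s, (X - C x) := by
  have hdvd : ∏ x ∈ s, (X - C x) ∣ p :=
    (Multiset.prod_X_sub_C_dvd_iff_le_roots hp.ne_zero s.val).2 <|
      (Multiset.le_iff_subset s.nodup).2 fun x hx => (mem_roots hp.ne_zero).2 (hroot x hx)
  exact eq_of_monic_of_dvd_of_natDegree_le (monic_prod_of_monic _ _ fun x _ => monic_X_sub_C x)
    hp hdvd (by rw [hdeg, natDegree_finsetProd_X_sub_C_eq_card])

theorem Polynomial.eq_X_mul_prod_X_sub_C_of_monic {R ι : Type*} [CommRing R] [IsDomain R]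
    {p : R[X]} (hp : p.Monic) {s : Finset ι} {b : ι → R} (hb : Set.InjOn b s)
    (hb0 : ∀ i ∈ s, b i ≠ 0) (hdeg : p.natDegree = #s + 1) (h0 : p.IsRoot 0)
    (hroot : ∀ i ∈ s, p.IsRoot (b i)) : p = X * ∏ i ∈ s, (X - C (b i)) := by
  classical
  have hnotMem : (0 : R) ∉ s.image b := by
    simpa only [mem_image, not_exists, not_and] using hb0
  rw [eq_prod_X_sub_C_of_monic_of_natDegree_eq_card hp (s := insert 0 (s.image b)),
    prod_insert hnotMem, prod_image hb, map_zero, sub_zero]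
  · rw [card_insert_of_notMem hnotMem, card_image_of_injOn hb, hdeg]
  · simpa only [mem_insert, mem_image, forall_eq_or_imp, forall_exists_index, and_imp,
      forall_apply_eq_imp_iff₂] using ⟨h0, hroot⟩

theorem Matrix.isRoot_charpoly_of_mulVec_eq_smul {n R : Type*} [Fintype n] [DecidableEq n]
    [CommRing R] [IsDomain R] (M : Matrix n n R) {v : n → R} (hv : v ≠ 0) {μ : R}
    (h : M *ᵥ v = μ • v) : M.charpoly.IsRoot μ := by
  rw [IsRoot, eval_charpoly, ← Matrix.exists_mulVec_eq_zero_iff]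
  exact ⟨v, hv, by simp [Matrix.sub_mulVec, h, Matrix.scalar_apply]⟩

theorem Finset.sum_Icc_one_eq_sum_fin {M : Type*} [AddCommMonoid M] (f : ℕ → M) (m : ℕ) :
    ∑ k ∈ Icc 1 m, f k = ∑ i : Fin m, f (i + 1) := by
  rw [Fin.sum_univ_eq_sum_range (fun i => f (i + 1)), range_eq_Ico, sum_Ico_add' f]
  rfl

section NeumannMatrix

variable {K : Type*} [Field K] (m : ℕ) (c ω : ℕ → K)

/-- The matrix (3.5): index `0` is the complement `Ω₀`, and `c j / ω j` is the paper's `A_j`. -/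
def neumannMatrix : Matrix (Fin (m + 1)) (Fin (m + 1)) K :=
  Matrix.of fun i j =>
    if i = 0 then
      (if j = 0 then (∑ k ∈ Icc 1 m, c k) / ω 0 else -c j.val / ω 0)
    else
      (if j = 0 then -c i.val / ω i.val
       else if i = j then c i.val / ω i.val else 0)

theorem neumannMatrix_mulVec_zero (w : ℕ → K) :
    (neumannMatrix m c ω *ᵥ fun i => w i) 0 = (∑ k ∈ Icc 1 m, c k * (w 0 - w k)) / ω 0 := by
  simp only [Matrix.mulVec, dotProduct, Fin.sum_univ_succ, neumannMatrix, Matrix.of_apply,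
    if_true, Fin.succ_ne_zero, if_false, Fin.val_zero, Fin.val_succ]
  simp only [sum_Icc_one_eq_sum_fin, mul_sub, sum_sub_distrib, ← sum_mul, neg_div, neg_mul,
    sum_neg_distrib, div_mul_eq_mul_div, ← sum_div]
  ring

theorem neumannMatrix_mulVec_of_ne_zero (w : ℕ → K) {i : Fin (m + 1)} (hi : i ≠ 0) :
    (neumannMatrix m c ω *ᵥ fun i => w i) i = c i * (w i - w 0) / ω i := by
  have hrow : ∀ j, neumannMatrix m c ω i j * w j =
      (if j = 0 then -c i / ω i * w 0 else 0) + (if i = j then c i / ω i * w i else 0) := by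
    intro j
    by_cases hj : j = 0
    · subst hj; simp [neumannMatrix, hi]
    · by_cases hij : i = j
      · subst hij; simp [neumannMatrix, hi]
      · simp [neumannMatrix, hi, hj, hij]
  simp only [Matrix.mulVec, dotProduct, hrow, sum_add_distrib, sum_ite_eq', sum_ite_eq,
    mem_univ, if_true]
  ring

theorem isRoot_charpoly_neumannMatrix_zero : (neumannMatrix m c ω).charpoly.IsRoot 0 := by
  refine Matrix.isRoot_charpoly_of_mulVec_eq_smul _ (v := fun _ => 1)
    (fun h => one_ne_zero (congrFun h (0 : Fin (m + 1)))) ?_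
  ext i
  rcases eq_or_ne i 0 with rfl | hi
  · simpa using neumannMatrix_mulVec_zero m c ω fun _ => 1
  · simpa using neumannMatrix_mulVec_of_ne_zero m c ω (fun _ => 1) hi

def neumannEigenvector (μ : K) (t : ℕ) : K :=
  if t = 0 then 1 else c t / ω t / (c t / ω t - μ)

theorem neumannMatrix_mulVec_eigenvector {μ : K} (hω : ∀ j ≤ m, ω j ≠ 0)
    (hμ : ∀ j ∈ Icc 1 m, c j / ω j ≠ μ)
    (hF : 1 + ∑ j ∈ Icc 1 m, c j / ω j * ω j / (ω 0 * (c j / ω j - μ)) = 0) :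
    (neumannMatrix m c ω *ᵥ fun i : Fin (m + 1) => neumannEigenvector c ω μ i) =
      μ • fun i : Fin (m + 1) => neumannEigenvector c ω μ i := by
  have hω0 : ω 0 ≠ 0 := hω 0 (Nat.zero_le m)
  have hsecular : ∑ j ∈ Icc 1 m, c j / (c j / ω j - μ) = -ω 0 := by
    have hterm : ∀ j ∈ Icc 1 m, c j / ω j * ω j / (ω 0 * (c j / ω j - μ)) =
        c j / (c j / ω j - μ) / ω 0 := by
      intro j hj
      rw [div_mul_cancel₀ _ (hω j (mem_Icc.1 hj).2), div_div, mul_comm (ω 0)]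
    rw [sum_congr rfl hterm, ← sum_div] at hF
    field_simp at hF
    linear_combination hF
  ext i
  rcases eq_or_ne i 0 with rfl | hi
  · have hterm : ∀ k ∈ Icc 1 m,
        c k * (neumannEigenvector c ω μ 0 - neumannEigenvector c ω μ k) =
          -μ * (c k / (c k / ω k - μ)) := by
      intro k hk
      have hk0 : k ≠ 0 := by have := (mem_Icc.1 hk).1; omega
      have hden := sub_ne_zero.2 (hμ k hk)
      simp only [neumannEigenvector, hk0, ↓reduceIte]
      field_simp
      ring
    rw [neumannMatrix_mulVec_zero, sum_congr rfl hterm, ← mul_sum, hsecular]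
    simp only [neumannEigenvector, Fin.val_zero, ↓reduceIte, Pi.smul_apply, smul_eq_mul]
    field_simp
  · rw [neumannMatrix_mulVec_of_ne_zero m c ω _ hi]
    have hi0 : (i : ℕ) ≠ 0 := Fin.val_ne_zero_iff.2 hi
    have hiIcc : (i : ℕ) ∈ Icc 1 m :=
      mem_Icc.2 ⟨Nat.one_le_iff_ne_zero.2 hi0, Nat.lt_succ_iff.1 i.2⟩
    have hωi := hω i (mem_Icc.1 hiIcc).2
    have hden : c i - ω i * μ ≠ 0 := fun h => hμ i hiIcc (by field_simp; linear_combination h)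
    simp only [neumannEigenvector, hi0, ↓reduceIte, Pi.smul_apply, smul_eq_mul]
    field_simp
    ring

theorem isRoot_charpoly_neumannMatrix {μ : K} (hω : ∀ j ≤ m, ω j ≠ 0)
    (hμ : ∀ j ∈ Icc 1 m, c j / ω j ≠ μ)
    (hF : 1 + ∑ j ∈ Icc 1 m, c j / ω j * ω j / (ω 0 * (c j / ω j - μ)) = 0) :
    (neumannMatrix m c ω).charpoly.IsRoot μ :=
  Matrix.isRoot_charpoly_of_mulVec_eq_smul _
    (fun h => one_ne_zero (congrFun h (0 : Fin (m + 1))))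
    (neumannMatrix_mulVec_eigenvector m c ω hω hμ hF)

end NeumannMatrix

theorem stmt_16_general (m : ℕ) (hm : 1 ≤ m) (c ω : ℕ → ℝ)
    (hc : ∀ j, 1 ≤ j → j ≤ m → 0 < c j)
    (hω : ∀ j ≤ m, 0 < ω j)
    (A : ℕ → ℝ) (hA : ∀ j, A j = c j / ω j)
    (B : ℕ → ℝ)
    (hBmono : ∀ i j, 1 ≤ i → i < j → j ≤ m → B i < B j)
    (hABlo : ∀ j, 1 ≤ j → j ≤ m → A j < B j)
    (hBnotA : ∀ k, 1 ≤ k → k ≤ m → ∀ j, 1 ≤ j → j ≤ m → B k ≠ A j)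
    (hBzero : ∀ k, 1 ≤ k → k ≤ m →
      1 + ∑ j ∈ Finset.Icc 1 m, A j * ω j / (ω 0 * (A j - B k)) = 0)
    (M : Matrix (Fin (m + 1)) (Fin (m + 1)) ℝ)
    (hM : ∀ i j : Fin (m + 1), M i j =
      if i = 0 then
        (if j = 0 then (∑ k ∈ Finset.Icc 1 m, c k) / ω 0 else -c j.val / ω 0)
      else
        (if j = 0 then -c i.val / ω i.val
         else if i = j then c i.val / ω i.val else 0)) :
    M.charpoly = Polynomial.X *
      ∏ j ∈ Finset.Icc 1 m, (Polynomial.X - Polynomial.C (B j)) ∧ 0 < B 1 := by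
  obtain rfl : A = fun j => c j / ω j := funext hA
  obtain rfl : M = neumannMatrix m c ω := Matrix.ext hM
  have hBpos : ∀ j, 1 ≤ j → j ≤ m → 0 < B j := fun j h1 h2 =>
    (div_pos (hc j h1 h2) (hω j h2)).trans (hABlo j h1 h2)
  refine ⟨eq_X_mul_prod_X_sub_C_of_monic (Matrix.charpoly_monic _) ?_ ?_ ?_
    (isRoot_charpoly_neumannMatrix_zero m c ω) fun k hk => ?_, hBpos 1 le_rfl hm⟩
  · exact StrictMonoOn.injOn fun i hi j hj hij => hBmono i j (mem_Icc.1 hi).1 hij (mem_Icc.1 hj).2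
  · exact fun j hj => (hBpos j (mem_Icc.1 hj).1 (mem_Icc.1 hj).2).ne'
  · rw [Matrix.charpoly_natDegree_eq_dim, Fintype.card_fin, Nat.card_Icc, Nat.add_sub_cancel]
  · obtain ⟨hk1, hkm⟩ := mem_Icc.1 hk
    exact isRoot_charpoly_neumannMatrix m c ω (fun j hj => (hω j hj).ne')
      (fun j hj => (hBnotA k hk1 hkm j (mem_Icc.1 hj).1 (mem_Icc.1 hj).2).symm) (hBzero k hk1 hkm)

/-- With positive `c_1, …, c_m`, positive `ω_0, …, ω_m`,
`A_j = c_j/ω_j` strictly increasing, and `B_1 < … < B_m` the zeros of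
`F(λ) = 1 + ∑ⱼ A_j ω_j/(ω_0(A_j − λ))` on `ℝ \ {A_1, …, A_m}` (which interlace:
`A_j < B_j < A_{j+1}`, `A_m < B_m`), the matrix `M` of (3.5) has characteristic
polynomial `X · ∏ⱼ (X − B_j)`; in particular `M` has the `m+1` simple
eigenvalues `0 < B_1 < … < B_m`. -/
theorem stmt_16 (m : ℕ) (hm : 1 ≤ m) (c ω : ℕ → ℝ)
    (hc : ∀ j, 1 ≤ j → j ≤ m → 0 < c j)
    (hω : ∀ j ≤ m, 0 < ω j)
    (A : ℕ → ℝ) (hA : ∀ j, A j = c j / ω j)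
    (hAmono : ∀ i j, 1 ≤ i → i < j → j ≤ m → A i < A j)
    (B : ℕ → ℝ)
    (hBmono : ∀ i j, 1 ≤ i → i < j → j ≤ m → B i < B j)
    (hABlo : ∀ j, 1 ≤ j → j ≤ m → A j < B j)
    (hABhi : ∀ j, 1 ≤ j → j < m → B j < A (j + 1))
    (hBnotA : ∀ k, 1 ≤ k → k ≤ m → ∀ j, 1 ≤ j → j ≤ m → B k ≠ A j)
    (hBzero : ∀ k, 1 ≤ k → k ≤ m →
      1 + ∑ j ∈ Finset.Icc 1 m, A j * ω j / (ω 0 * (A j - B k)) = 0)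
    (M : Matrix (Fin (m + 1)) (Fin (m + 1)) ℝ)
    (hM : ∀ i j : Fin (m + 1), M i j =
      if i = 0 then
        (if j = 0 then (∑ k ∈ Finset.Icc 1 m, c k) / ω 0 else -c j.val / ω 0)
      else
        (if j = 0 then -c i.val / ω i.val
         else if i = j then c i.val / ω i.val else 0)) :
    M.charpoly = Polynomial.X *
      ∏ j ∈ Finset.Icc 1 m, (Polynomial.X - Polynomial.C (B j)) ∧ 0 < B 1 :=
  stmt_16_general m hm c ω hc hω A hA B hBmono hABlo hBnotA hBzero M hM
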